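/- arXiv:1807.06910 — 5 statements merged into one kernel-verified Lean document; each statement's English description precedes it below -/
import Mathlib

section
/- Let G be a snake graph and let G_i and G_{i+1} be two consecutive tiles of G sharing the side a. If b ≠ a is a side of G_i having a common vertex with a, and c ≠ a is a side of G_{i+1} having a common vertex with a, then no perfect matching of G contains both b and c. -/
/-- An edge of the integer lattice: `(p, true)` is the horizontal unit segment
from `p` to `p + (1, 0)`, and `(p, false)` is the vertical unit segment from
`p` to `p + (0, 1)`. -/
abbrev LatticeEdge : Type := (ℤ × ℤ) × Bool

/-- A lattice edge is horizontal if it is parallel to the x-axis. -/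
def IsHorizontalEdge (e : LatticeEdge) : Prop := e.2 = true

/-- A lattice edge is vertical if it is parallel to the y-axis. -/
def IsVerticalEdge (e : LatticeEdge) : Prop := e.2 = false

/-- The two endpoints of a lattice edge. -/
def endpointsOf (e : LatticeEdge) : Set (ℤ × ℤ) :=
  if e.2 then {e.1, (e.1.1 + 1, e.1.2)} else {e.1, (e.1.1, e.1.2 + 1)}

/-- The south side of the unit tile with lower-left corner `c`. -/
def southSide (c : ℤ × ℤ) : LatticeEdge := (c, true)

/-- The north side of the unit tile with lower-left corner `c`. -/
def northSide (c : ℤ × ℤ) : LatticeEdge := ((c.1, c.2 + 1), true)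

/-- The west side of the unit tile with lower-left corner `c`. -/
def westSide (c : ℤ × ℤ) : LatticeEdge := (c, false)

/-- The east side of the unit tile with lower-left corner `c`. -/
def eastSide (c : ℤ × ℤ) : LatticeEdge := ((c.1 + 1, c.2), false)

/-- The four sides of the unit tile with lower-left corner `c`. -/
def tileSides (c : ℤ × ℤ) : Set LatticeEdge :=
  {southSide c, northSide c, westSide c, eastSide c}

/-- The four corners of the unit tile with lower-left corner `c`. -/
def tileCorners (c : ℤ × ℤ) : Set (ℤ × ℤ) :=
  {c, (c.1 + 1, c.2), (c.1, c.2 + 1), (c.1 + 1, c.2 + 1)}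

/-- A snake graph with `d ≥ 1` tiles: tile `1` has lower-left corner `(0, 0)`,
and each subsequent tile is the translate of the previous one by one unit to
the right or one unit up.  Tiles are indexed `1, …, d`; `corner i` is the
lower-left corner of tile `i`. -/
structure SnakeGraph where
  d : ℕ
  one_le_d : 1 ≤ d
  corner : ℕ → ℤ × ℤ
  corner_one : corner 1 = (0, 0)
  corner_succ : ∀ i, 1 ≤ i → i < d →
    corner (i + 1) = ((corner i).1 + 1, (corner i).2) ∨
      corner (i + 1) = ((corner i).1, (corner i).2 + 1)

namespace SnakeGraph

/-- The set of sides of tile `i` of `G`. -/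
def tile (G : SnakeGraph) (i : ℕ) : Set LatticeEdge := tileSides (G.corner i)

/-- The edge set of (the graph of) `G`: all sides of all tiles. -/
def edges (G : SnakeGraph) : Set LatticeEdge := ⋃ i ∈ Set.Icc 1 G.d, G.tile i

/-- The vertex set of `G`: all corners of all tiles. -/
def vertices (G : SnakeGraph) : Set (ℤ × ℤ) :=
  ⋃ i ∈ Set.Icc 1 G.d, tileCorners (G.corner i)

/-- A perfect matching of `G`: a set of edges of `G` such that every vertex of
`G` is incident to exactly one edge of the set. -/
def IsPerfectMatching (G : SnakeGraph) (P : Set LatticeEdge) : Prop :=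
  P ⊆ G.edges ∧ ∀ v ∈ G.vertices, ∃! e, e ∈ P ∧ v ∈ endpointsOf e

/-- `P` can twist on tile `i` if two of the four sides of tile `i` belong to `P`. -/
def CanTwist (G : SnakeGraph) (P : Set LatticeEdge) (i : ℕ) : Prop :=
  1 ≤ i ∧ i ≤ G.d ∧ (P ∩ G.tile i).ncard = 2

/-- The twist of `P` on tile `i`: replace the sides of tile `i` belonging to
`P` by the other sides of tile `i`. -/
def twist (G : SnakeGraph) (i : ℕ) (P : Set LatticeEdge) : Set LatticeEdge :=
  (P \ G.tile i) ∪ (G.tile i \ P)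

/-- A boundary edge of `G`: an edge which is a side of exactly one tile. -/
def IsBoundaryEdge (G : SnakeGraph) (e : LatticeEdge) : Prop :=
  ∃! i, (1 ≤ i ∧ i ≤ G.d) ∧ e ∈ G.tile i

/-- `P` is the minimal matching `P₋` of `G`: the perfect matching consisting
only of boundary edges which contains no vertical side of tile `1`. -/
def IsMinimalMatching (G : SnakeGraph) (P : Set LatticeEdge) : Prop :=
  G.IsPerfectMatching P ∧ (∀ e ∈ P, G.IsBoundaryEdge e) ∧
    ∀ e ∈ P ∩ G.tile 1, IsHorizontalEdge e

/-- `P` is the maximal matching `P₊` of `G`: the perfect matching consisting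
only of boundary edges other than the minimal one, i.e. the one containing a
vertical side of tile `1`. -/
def IsMaximalMatching (G : SnakeGraph) (P : Set LatticeEdge) : Prop :=
  G.IsPerfectMatching P ∧ (∀ e ∈ P, G.IsBoundaryEdge e) ∧
    ∃ e ∈ P ∩ G.tile 1, IsVerticalEdge e

/-- `G` is a straight snake graph: every tile is the translate of the previous
one by one unit to the right. -/
def IsStraight (G : SnakeGraph) : Prop :=
  ∀ i, 1 ≤ i → i < G.d → G.corner (i + 1) = ((G.corner i).1 + 1, (G.corner i).2)

end SnakeGraph

open Set

/-!
If `b` and `c` share their endpoint on `a`, a matching cannot contain both unless `b = c`, which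
would be a second common side of the two tiles. Otherwise `b` covers one endpoint `u` of `a` and
`c` the other one, `w`. The first `i` tiles have `2i + 2` corners, and the only ones they share
with later tiles are the endpoints of `a`. So a perfect matching containing `b` and `c` matches
the `2i + 1` corners of the first `i` tiles other than `w` among themselves, contradicting parity.
-/

lemma mem_tileCorners_iff {c v : ℤ × ℤ} :
    v ∈ tileCorners c ↔ (v.1 = c.1 ∨ v.1 = c.1 + 1) ∧ (v.2 = c.2 ∨ v.2 = c.2 + 1) := by
  obtain ⟨x, y⟩ := v
  simp only [tileCorners, mem_insert_iff, mem_singleton_iff, Prod.ext_iff]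
  tauto

lemma finite_tileCorners (c : ℤ × ℤ) : (tileCorners c).Finite := by
  simp [tileCorners]

lemma ncard_tileCorners (c : ℤ × ℤ) : (tileCorners c).ncard = 4 := by
  rw [tileCorners, ncard_insert_of_notMem, ncard_insert_of_notMem, ncard_pair] <;>
    simp [Prod.ext_iff]

lemma ncard_endpointsOf (e : LatticeEdge) : (endpointsOf e).ncard = 2 := by
  unfold endpointsOf
  split <;> exact ncard_pair (by simp [Prod.ext_iff])

lemma endpointsOf_subset_tileCorners {e : LatticeEdge} {c : ℤ × ℤ} (h : e ∈ tileSides c) :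
    endpointsOf e ⊆ tileCorners c := by
  simp only [tileSides, mem_insert_iff, mem_singleton_iff] at h
  rcases h with rfl | rfl | rfl | rfl <;> intro v hv <;>
    simp [endpointsOf, southSide, northSide, westSide, eastSide] at hv <;>
    rcases hv with rfl | rfl <;> simp [mem_tileCorners_iff]

lemma eq_of_mem_endpointsOf_of_ne {e : LatticeEdge} {u v w : ℤ × ℤ} (hu : u ∈ endpointsOf e)
    (hv : v ∈ endpointsOf e) (hw : w ∈ endpointsOf e) (huw : u ≠ w) (hvw : v ≠ w) : v = u := by
  obtain ⟨p, q, -, hpq⟩ := ncard_eq_two.mp (ncard_endpointsOf e)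
  rw [hpq] at hu hv hw
  simp only [mem_insert_iff, mem_singleton_iff] at hu hv hw
  grind

lemma eq_of_mem_endpointsOf_of_mem_endpointsOf {e e' : LatticeEdge} {u w : ℤ × ℤ}
    (huw : u ≠ w) (hu : u ∈ endpointsOf e) (hw : w ∈ endpointsOf e)
    (hu' : u ∈ endpointsOf e') (hw' : w ∈ endpointsOf e') : e = e' := by
  obtain ⟨⟨x, y⟩, s⟩ := e
  obtain ⟨⟨x', y'⟩, s'⟩ := e'
  cases s <;> cases s' <;> simp [endpointsOf, Prod.ext_iff] at * <;> omega

def IsUnitStep (c c' : ℤ × ℤ) : Prop := c' = (c.1 + 1, c.2) ∨ c' = (c.1, c.2 + 1)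

namespace IsUnitStep

variable {c c' : ℤ × ℤ}

lemma tileSides_inter_subsingleton (h : IsUnitStep c c') :
    (tileSides c ∩ tileSides c').Subsingleton := by
  rintro ⟨⟨x, y⟩, s⟩ ⟨he, he'⟩ ⟨⟨x', y'⟩, s'⟩ ⟨hf, hf'⟩
  rcases h with rfl | rfl <;> cases s <;> cases s' <;>
    simp [tileSides, southSide, northSide, westSide, eastSide, Prod.ext_iff] at * <;> omega

lemma tileCorners_inter_eq {a : LatticeEdge} (h : IsUnitStep c c')
    (ha : a ∈ tileSides c ∩ tileSides c') :
    tileCorners c ∩ tileCorners c' = endpointsOf a := by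
  obtain ⟨⟨x, y⟩, s⟩ := a
  obtain ⟨ha, ha'⟩ := ha
  ext ⟨u, v⟩
  rcases h with rfl | rfl <;> cases s <;>
    simp [tileSides, southSide, northSide, westSide, eastSide, Prod.ext_iff] at ha ha' <;>
    simp [mem_tileCorners_iff, endpointsOf] <;> omega

lemma ncard_tileCorners_inter (h : IsUnitStep c c') :
    (tileCorners c ∩ tileCorners c').ncard = 2 := by
  have hshared : ∃ a, a ∈ tileSides c ∩ tileSides c' := by
    rcases h with rfl | rfl
    · exact ⟨eastSide c, by simp [tileSides, eastSide, westSide]⟩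
    · exact ⟨northSide c, by simp [tileSides, northSide, southSide]⟩
  obtain ⟨a, ha⟩ := hshared
  rw [h.tileCorners_inter_eq ha, ncard_endpointsOf]

end IsUnitStep

theorem even_ncard_of_covered_by_matching {V E : Type*} (ends : E → Set V)
    (hends : ∀ e, (ends e).ncard = 2) {P : Set E} {X : Set V} (hX : X.Finite)
    (hunique : ∀ v ∈ X, ∃! e, e ∈ P ∧ v ∈ ends e)
    (hclosed : ∀ e ∈ P, ∀ v ∈ X, v ∈ ends e → ends e ⊆ X) : Even X.ncard := by
  induction hn : X.ncard using Nat.strong_induction_on generalizing X with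
  | _ n ih =>
  obtain rfl | ⟨v, hv⟩ := X.eq_empty_or_nonempty
  · simp [← hn]
  obtain ⟨e, ⟨he, hve⟩, -⟩ := hunique v hv
  have hsub : ends e ⊆ X := hclosed e he v hv hve
  have hcard : (X \ ends e).ncard + 2 = n := by
    rw [← hends e, ← hn, ncard_sdiff hsub (hX.subset hsub),
      Nat.sub_add_cancel (ncard_le_ncard hsub hX)]
  have hdisjoint : ∀ f ∈ P, ∀ u ∈ X \ ends e, u ∈ ends f → Disjoint (ends f) (ends e) := by
    refine fun f hf u hu huf ↦ disjoint_left.mpr fun x hxf hxe ↦ hu.2 ?_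
    rwa [← (hunique x (hsub hxe)).unique ⟨hf, hxf⟩ ⟨he, hxe⟩]
  obtain ⟨k, hk⟩ := ih _ (by omega) hX.sdiff (fun u hu ↦ hunique u hu.1)
    (fun f hf u hu huf ↦ subset_sdiff.mpr ⟨hclosed f hf u hu.1 huf, hdisjoint f hf u hu huf⟩) rfl
  exact ⟨k + 1, by omega⟩

namespace SnakeGraph

variable (G : SnakeGraph)

def verticesUpTo (i : ℕ) : Set (ℤ × ℤ) := ⋃ j ∈ Icc 1 i, tileCorners (G.corner j)

lemma isUnitStep_corner_succ {i : ℕ} (hi : 1 ≤ i) (hid : i < G.d) :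
    IsUnitStep (G.corner i) (G.corner (i + 1)) :=
  G.corner_succ i hi hid

lemma monotoneOn_corner : MonotoneOn G.corner (Icc 1 G.d) := by
  refine monotoneOn_of_le_succ ordConnected_Icc fun i _ hi hi' ↦ ?_
  rw [Order.succ_eq_add_one] at hi' ⊢
  rcases G.isUnitStep_corner_succ hi.1 hi'.2 with h | h <;> rw [h, Prod.le_def] <;> simp

lemma finite_verticesUpTo (i : ℕ) : (G.verticesUpTo i).Finite :=
  (finite_Icc 1 i).biUnion fun _ _ ↦ finite_tileCorners _

lemma tileCorners_subset_verticesUpTo {i j : ℕ} (hj : 1 ≤ j) (hji : j ≤ i) :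
    tileCorners (G.corner j) ⊆ G.verticesUpTo i :=
  subset_biUnion_of_mem (u := fun j ↦ tileCorners (G.corner j)) (mem_Icc.mpr ⟨hj, hji⟩)

lemma verticesUpTo_subset_vertices {i : ℕ} (hid : i ≤ G.d) : G.verticesUpTo i ⊆ G.vertices :=
  biUnion_subset_biUnion_left (Icc_subset_Icc_right hid)

lemma verticesUpTo_one : G.verticesUpTo 1 = tileCorners (G.corner 1) := by
  simp [verticesUpTo]

lemma verticesUpTo_succ (i : ℕ) :
    G.verticesUpTo (i + 1) = G.verticesUpTo i ∪ tileCorners (G.corner (i + 1)) := by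
  rw [verticesUpTo, ← insert_Icc_right_eq_Icc_add_one (by omega), biUnion_insert, union_comm]
  rfl

lemma le_of_mem_verticesUpTo {i : ℕ} (hid : i ≤ G.d) {v : ℤ × ℤ} (hv : v ∈ G.verticesUpTo i) :
    v.1 ≤ (G.corner i).1 + 1 ∧ v.2 ≤ (G.corner i).2 + 1 := by
  simp only [verticesUpTo, mem_iUnion, mem_Icc] at hv
  obtain ⟨j, ⟨hj, hji⟩, hvj⟩ := hv
  have hle := G.monotoneOn_corner ⟨hj, hji.trans hid⟩ ⟨hj.trans hji, hid⟩ hji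
  rw [mem_tileCorners_iff] at hvj
  rw [Prod.le_def] at hle
  omega

lemma verticesUpTo_inter_tileCorners_subset {i j : ℕ} (hi : 1 ≤ i) (hij : i < j) (hjd : j ≤ G.d) :
    G.verticesUpTo i ∩ tileCorners (G.corner j) ⊆
      tileCorners (G.corner i) ∩ tileCorners (G.corner (i + 1)) := by
  rintro v ⟨hvi, hvj⟩
  have hv := G.le_of_mem_verticesUpTo (hij.le.trans hjd) hvi
  have hle := G.monotoneOn_corner ⟨by omega, by omega⟩ ⟨by omega, hjd⟩ (show i + 1 ≤ j from hij)
  rw [mem_tileCorners_iff] at hvj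
  rw [Prod.le_def] at hle
  simp only [mem_inter_iff, mem_tileCorners_iff]
  rcases G.isUnitStep_corner_succ hi (by omega) with h | h <;> rw [h] at hle ⊢ <;>
    dsimp at hle ⊢ <;> omega

lemma ncard_verticesUpTo {i : ℕ} (hi : 1 ≤ i) (hid : i ≤ G.d) :
    (G.verticesUpTo i).ncard = 2 * i + 2 := by
  induction i, hi using Nat.le_induction with
  | base => rw [verticesUpTo_one, ncard_tileCorners]
  | succ k hk ih =>
    have hinter : G.verticesUpTo k ∩ tileCorners (G.corner (k + 1)) =
        tileCorners (G.corner k) ∩ tileCorners (G.corner (k + 1)) :=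
      (G.verticesUpTo_inter_tileCorners_subset hk (Nat.lt_succ_self k) hid).antisymm
        (inter_subset_inter_left _ (G.tileCorners_subset_verticesUpTo hk le_rfl))
    have hunion := ncard_union_add_ncard_inter (G.verticesUpTo k) (tileCorners (G.corner (k + 1)))
      (G.finite_verticesUpTo k) (finite_tileCorners _)
    rw [← verticesUpTo_succ, hinter, (G.isUnitStep_corner_succ hk hid).ncard_tileCorners_inter,
      ih (by omega), ncard_tileCorners] at hunion
    omega

variable {G}

lemma mem_vertices_of_mem_endpointsOf {j : ℕ} (hj : 1 ≤ j) (hjd : j ≤ G.d) {e : LatticeEdge}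
    (he : e ∈ G.tile j) {v : ℤ × ℤ} (hv : v ∈ endpointsOf e) : v ∈ G.vertices :=
  G.tileCorners_subset_verticesUpTo hj hjd (endpointsOf_subset_tileCorners he hv)

lemma verticesUpTo_inter_tileCorners_subset_endpointsOf {i j : ℕ} (hi : 1 ≤ i) (hij : i < j)
    (hjd : j ≤ G.d) {a : LatticeEdge} (ha : a ∈ G.tile i ∩ G.tile (i + 1)) :
    G.verticesUpTo i ∩ tileCorners (G.corner j) ⊆ endpointsOf a :=
  (G.isUnitStep_corner_succ hi (hij.trans_le hjd)).tileCorners_inter_eq ha ▸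
    G.verticesUpTo_inter_tileCorners_subset hi hij hjd

namespace IsPerfectMatching

variable {P : Set LatticeEdge}

lemma exists_mem_tile (hP : G.IsPerfectMatching P) {e : LatticeEdge} (he : e ∈ P) :
    ∃ j, (1 ≤ j ∧ j ≤ G.d) ∧ e ∈ G.tile j := by
  simpa [edges] using hP.1 he

lemma eq_of_mem_endpointsOf (hP : G.IsPerfectMatching P) {v : ℤ × ℤ} (hv : v ∈ G.vertices)
    {e e' : LatticeEdge} (he : e ∈ P) (he' : e' ∈ P) (hve : v ∈ endpointsOf e)
    (hve' : v ∈ endpointsOf e') : e = e' :=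
  (hP.2 v hv).unique ⟨he, hve⟩ ⟨he', hve'⟩

lemma endpointsOf_subset_verticesUpTo_sdiff (hP : G.IsPerfectMatching P) {i : ℕ} (hi1 : 1 ≤ i)
    (hi2 : i + 1 ≤ G.d) {a b c : LatticeEdge} (ha : a ∈ G.tile i ∩ G.tile (i + 1))
    (hb : b ∈ G.tile i) (hba : b ≠ a) (hc : c ∈ G.tile (i + 1)) (hca : c ≠ a)
    (hbP : b ∈ P) (hcP : c ∈ P) {u w : ℤ × ℤ} (hu : u ∈ endpointsOf a ∩ endpointsOf b)
    (hw : w ∈ endpointsOf a ∩ endpointsOf c) (huw : u ≠ w) {e : LatticeEdge} (he : e ∈ P)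
    {v : ℤ × ℤ} (hv : v ∈ G.verticesUpTo i \ {w}) (hve : v ∈ endpointsOf e) :
    endpointsOf e ⊆ G.verticesUpTo i \ {w} := by
  obtain ⟨j, ⟨hj, hjd⟩, hej⟩ := hP.exists_mem_tile he
  rcases le_or_gt j i with hji | hij
  · -- `e` cannot reach `w`: it would then be `c`, and `c` would have both endpoints `v`, `w` of `a`
    refine subset_sdiff_singleton ((endpointsOf_subset_tileCorners hej).trans
      (G.tileCorners_subset_verticesUpTo hj hji)) fun hwe ↦ hca ?_
    obtain rfl : e = c :=
      hP.eq_of_mem_endpointsOf (mem_vertices_of_mem_endpointsOf (by omega) hi2 hc hw.2) he hcP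
        hwe hw.2
    exact eq_of_mem_endpointsOf_of_mem_endpointsOf hv.2 hve hwe
      (verticesUpTo_inter_tileCorners_subset_endpointsOf hi1 (Nat.lt_succ_self i) hi2 ha
        ⟨hv.1, endpointsOf_subset_tileCorners hc hve⟩) hw.1
  · -- `v` is an endpoint of `a` other than `w`, so `v = u` and `e = b`
    have hva : v ∈ endpointsOf a := verticesUpTo_inter_tileCorners_subset_endpointsOf hi1 hij hjd ha
      ⟨hv.1, endpointsOf_subset_tileCorners hej hve⟩
    obtain rfl : v = u := eq_of_mem_endpointsOf_of_ne hu.1 hva hw.1 huw hv.2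
    obtain rfl : e = b :=
      hP.eq_of_mem_endpointsOf (mem_vertices_of_mem_endpointsOf hi1 (by omega) hb hu.2) he hbP
        hve hu.2
    exact subset_sdiff_singleton ((endpointsOf_subset_tileCorners hb).trans
      (G.tileCorners_subset_verticesUpTo hi1 le_rfl))
      fun hwe ↦ hba (eq_of_mem_endpointsOf_of_mem_endpointsOf huw hve hwe hu.1 hw.1)

end IsPerfectMatching

end SnakeGraph

/-- If `G_i` and `G_{i+1}` are consecutive tiles of a snake graph `G` sharing
the side `a`, `b ≠ a` is a side of `G_i` having a common vertex with `a`, and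
`c ≠ a` is a side of `G_{i+1}` having a common vertex with `a`, then no
perfect matching of `G` contains both `b` and `c`. -/
theorem no_matching_contains_both_neighbours
    (G : SnakeGraph) (i : ℕ) (hi1 : 1 ≤ i) (hi2 : i + 1 ≤ G.d)
    (a b c : LatticeEdge)
    (ha : a ∈ G.tile i ∩ G.tile (i + 1))
    (hb : b ∈ G.tile i) (hba : b ≠ a)
    (hbv : (endpointsOf a ∩ endpointsOf b).Nonempty)
    (hc : c ∈ G.tile (i + 1)) (hca : c ≠ a)
    (hcv : (endpointsOf a ∩ endpointsOf c).Nonempty)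
    (P : Set LatticeEdge) (hP : G.IsPerfectMatching P) :
    ¬(b ∈ P ∧ c ∈ P) := by
  rintro ⟨hbP, hcP⟩
  obtain ⟨u, hu⟩ := hbv
  obtain ⟨w, hw⟩ := hcv
  obtain rfl | huw := eq_or_ne u w
  · have hbc : b = c :=
      hP.eq_of_mem_endpointsOf (SnakeGraph.mem_vertices_of_mem_endpointsOf hi1 (by omega) hb hu.2)
        hbP hcP hu.2 hw.2
    exact hba ((G.isUnitStep_corner_succ hi1 hi2).tileSides_inter_subsingleton
      ⟨hb, hbc ▸ hc⟩ ha)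
  · have hw_mem : w ∈ G.verticesUpTo i :=
      G.tileCorners_subset_verticesUpTo hi1 le_rfl (endpointsOf_subset_tileCorners ha.1 hw.1)
    have hcard : (G.verticesUpTo i \ {w}).ncard = 2 * i + 1 := by
      rw [ncard_sdiff_singleton_of_mem hw_mem, G.ncard_verticesUpTo hi1 (by omega)]
      omega
    exact Nat.not_even_two_mul_add_one i (hcard ▸ even_ncard_of_covered_by_matching endpointsOf
      ncard_endpointsOf (G.finite_verticesUpTo i).sdiff
      (fun v hv ↦ hP.2 v (G.verticesUpTo_subset_vertices (by omega) hv.1))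
      fun e he v hv hve ↦ hP.endpointsOf_subset_verticesUpTo_sdiff hi1 hi2 ha hb hba hc hca hbP
        hcP hu hw huw he hv hve)
end

section
/- Let G be a snake graph. If a perfect matching P of G can twist on the tile G_i, then μ_i P is a perfect matching of G, μ_i P can twist on G_i, and μ_i(μ_i P) = P. -/
section Aux

@[simp] lemma endpoints_south (c : ℤ × ℤ) :
    endpointsOf (southSide c) = {c, (c.1 + 1, c.2)} := by
  simp [endpointsOf, southSide]

@[simp] lemma endpoints_north (c : ℤ × ℤ) :
    endpointsOf (northSide c) = {(c.1, c.2 + 1), (c.1 + 1, c.2 + 1)} := by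
  simp [endpointsOf, northSide]

@[simp] lemma endpoints_west (c : ℤ × ℤ) :
    endpointsOf (westSide c) = {c, (c.1, c.2 + 1)} := by
  simp [endpointsOf, westSide]

@[simp] lemma endpoints_east (c : ℤ × ℤ) :
    endpointsOf (eastSide c) = {(c.1 + 1, c.2), (c.1 + 1, c.2 + 1)} := by
  simp [endpointsOf, eastSide]

lemma endpoints_subset_corners {c : ℤ × ℤ} {e : LatticeEdge} (he : e ∈ tileSides c) :
    endpointsOf e ⊆ tileCorners c := by
  rcases he with rfl | rfl | rfl | rfl <;>
    · intro v hv
      simp only [endpoints_south, endpoints_north, endpoints_west, endpoints_east,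
        Set.mem_insert_iff, Set.mem_singleton_iff] at hv
      rcases hv with rfl | rfl <;> simp [tileCorners]

lemma south_ne_north (c : ℤ × ℤ) : southSide c ≠ northSide c := by
  simp [southSide, northSide, Prod.ext_iff]

lemma west_ne_east (c : ℤ × ℤ) : westSide c ≠ eastSide c := by
  simp [westSide, eastSide, Prod.ext_iff]

lemma south_ne_west (c : ℤ × ℤ) : southSide c ≠ westSide c := by
  simp [southSide, westSide]

lemma south_ne_east (c : ℤ × ℤ) : southSide c ≠ eastSide c := by
  simp [southSide, eastSide]

lemma north_ne_west (c : ℤ × ℤ) : northSide c ≠ westSide c := by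
  simp [northSide, westSide]

lemma north_ne_east (c : ℤ × ℤ) : northSide c ≠ eastSide c := by
  simp [northSide, eastSide]

/-- Each corner of a tile is an endpoint of exactly one of the south/north sides. -/
lemma corner_SN (c : ℤ × ℤ) (v : ℤ × ℤ) (hv : v ∈ tileCorners c) :
    (v ∈ endpointsOf (southSide c) ↔ v ∉ endpointsOf (northSide c)) := by
  simp only [tileCorners, Set.mem_insert_iff, Set.mem_singleton_iff] at hv
  rcases hv with rfl | rfl | rfl | rfl <;>
    · simp [Prod.ext_iff]
      try omega

/-- Each corner of a tile is an endpoint of exactly one of the west/east sides. -/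
lemma corner_WE (c : ℤ × ℤ) (v : ℤ × ℤ) (hv : v ∈ tileCorners c) :
    (v ∈ endpointsOf (westSide c) ↔ v ∉ endpointsOf (eastSide c)) := by
  simp only [tileCorners, Set.mem_insert_iff, Set.mem_singleton_iff] at hv
  rcases hv with rfl | rfl | rfl | rfl <;>
    · simp [Prod.ext_iff]
      try omega

end Aux

/-- If a perfect matching `P` of a snake graph `G` can twist on the tile
`G_i`, then `μ_i P` is a perfect matching of `G`, `μ_i P` can twist on `G_i`,
and `μ_i (μ_i P) = P`. -/
theorem twist_involutive
    (G : SnakeGraph) (P : Set LatticeEdge) (i : ℕ)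
    (hP : G.IsPerfectMatching P) (h : G.CanTwist P i) :
    G.IsPerfectMatching (G.twist i P) ∧ G.CanTwist (G.twist i P) i ∧
      G.twist i (G.twist i P) = P := by
  obtain ⟨hi1, hid, hcard⟩ := h
  obtain ⟨hPsub, hPm⟩ := hP
  set c := G.corner i with hc
  set T := G.tile i with hTdef
  have hTset : T = {southSide c, northSide c, westSide c, eastSide c} := rfl
  have hiIcc : i ∈ Set.Icc 1 G.d := ⟨hi1, hid⟩
  have hTedges : T ⊆ G.edges := fun e he => Set.mem_biUnion hiIcc he
  have hcornv : tileCorners c ⊆ G.vertices := fun v hv => Set.mem_biUnion hiIcc hv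
  -- pairwise conflicts: two sides of the tile sharing a corner cannot both be in `P`
  have hconf : ∀ e₁ ∈ P, ∀ e₂ ∈ P, ∀ v ∈ tileCorners c,
      v ∈ endpointsOf e₁ → v ∈ endpointsOf e₂ → e₁ = e₂ := by
    intro e₁ h₁ e₂ h₂ v hv hv₁ hv₂
    obtain ⟨e, _, hu⟩ := hPm v (hcornv hv)
    rw [hu e₁ ⟨h₁, hv₁⟩, hu e₂ ⟨h₂, hv₂⟩]
  have hSW : ¬(southSide c ∈ P ∧ westSide c ∈ P) := by
    rintro ⟨h₁, h₂⟩
    exact south_ne_west c (hconf _ h₁ _ h₂ c (by simp [tileCorners]) (by simp) (by simp))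
  have hSE : ¬(southSide c ∈ P ∧ eastSide c ∈ P) := by
    rintro ⟨h₁, h₂⟩
    exact south_ne_east c (hconf _ h₁ _ h₂ (c.1 + 1, c.2) (by simp [tileCorners])
      (by simp) (by simp))
  have hNW : ¬(northSide c ∈ P ∧ westSide c ∈ P) := by
    rintro ⟨h₁, h₂⟩
    exact north_ne_west c (hconf _ h₁ _ h₂ (c.1, c.2 + 1) (by simp [tileCorners])
      (by simp) (by simp))
  have hNE : ¬(northSide c ∈ P ∧ eastSide c ∈ P) := by
    rintro ⟨h₁, h₂⟩
    exact north_ne_east c (hconf _ h₁ _ h₂ (c.1 + 1, c.2 + 1) (by simp [tileCorners])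
      (by simp) (by simp))
  -- structure of `P ∩ T`
  have hC : (P ∩ T = {southSide c, northSide c} ∧ T \ P = {westSide c, eastSide c}) ∨
      (P ∩ T = {westSide c, eastSide c} ∧ T \ P = {southSide c, northSide c}) := by
    have hdiff : ∀ Q : Set LatticeEdge, P ∩ T = Q → T \ P = T \ Q := by
      intro Q hQ
      ext e
      constructor
      · rintro ⟨heT, heP⟩
        refine ⟨heT, fun heQ => heP ?_⟩
        rw [← hQ] at heQ; exact heQ.1
      · rintro ⟨heT, heQ⟩
        refine ⟨heT, fun heP => heQ ?_⟩
        rw [← hQ]; exact ⟨heP, heT⟩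
    have hdSN : T \ ({southSide c, northSide c} : Set LatticeEdge)
        = {westSide c, eastSide c} := by
      rw [hTset]
      ext e
      simp only [Set.mem_diff, Set.mem_insert_iff, Set.mem_singleton_iff]
      constructor
      · rintro ⟨rfl | rfl | rfl | rfl, hne⟩ <;> push_neg at hne
        · exact absurd rfl hne.1
        · exact absurd rfl hne.2
        · exact Or.inl rfl
        · exact Or.inr rfl
      · rintro (rfl | rfl)
        · refine ⟨Or.inr (Or.inr (Or.inl rfl)), ?_⟩
          push_neg
          exact ⟨(south_ne_west c).symm, (north_ne_west c).symm⟩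
        · refine ⟨Or.inr (Or.inr (Or.inr rfl)), ?_⟩
          push_neg
          exact ⟨(south_ne_east c).symm, (north_ne_east c).symm⟩
    have hdWE : T \ ({westSide c, eastSide c} : Set LatticeEdge)
        = {southSide c, northSide c} := by
      rw [hTset]
      ext e
      simp only [Set.mem_diff, Set.mem_insert_iff, Set.mem_singleton_iff]
      constructor
      · rintro ⟨rfl | rfl | rfl | rfl, hne⟩ <;> push_neg at hne
        · exact Or.inl rfl
        · exact Or.inr rfl
        · exact absurd rfl hne.1
        · exact absurd rfl hne.2
      · rintro (rfl | rfl)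
        · refine ⟨Or.inl rfl, ?_⟩
          push_neg
          exact ⟨south_ne_west c, south_ne_east c⟩
        · refine ⟨Or.inr (Or.inl rfl), ?_⟩
          push_neg
          exact ⟨north_ne_west c, north_ne_east c⟩
    obtain ⟨a, b, hab, heq⟩ := Set.ncard_eq_two.1 hcard
    have haP : a ∈ P ∩ T := by rw [heq]; simp
    have hbP : b ∈ P ∩ T := by rw [heq]; simp
    have haT := haP.2; have hbT := hbP.2
    rw [hTset] at haT hbT
    simp only [Set.mem_insert_iff, Set.mem_singleton_iff] at haT hbT
    have key : (P ∩ T = {southSide c, northSide c}) ∨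
        (P ∩ T = {westSide c, eastSide c}) := by
      rcases haT with rfl | rfl | rfl | rfl
      · rcases hbT with rfl | rfl | rfl | rfl
        · exact absurd rfl hab
        · left; rw [heq]
        · exact absurd ⟨haP.1, hbP.1⟩ hSW
        · exact absurd ⟨haP.1, hbP.1⟩ hSE
      · rcases hbT with rfl | rfl | rfl | rfl
        · left; rw [heq]; exact Set.pair_comm _ _
        · exact absurd rfl hab
        · exact absurd ⟨haP.1, hbP.1⟩ hNW
        · exact absurd ⟨haP.1, hbP.1⟩ hNE
      · rcases hbT with rfl | rfl | rfl | rfl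
        · exact absurd ⟨hbP.1, haP.1⟩ hSW
        · exact absurd ⟨hbP.1, haP.1⟩ hNW
        · exact absurd rfl hab
        · right; rw [heq]
      · rcases hbT with rfl | rfl | rfl | rfl
        · exact absurd ⟨hbP.1, haP.1⟩ hSE
        · exact absurd ⟨hbP.1, haP.1⟩ hNE
        · right; rw [heq]; exact Set.pair_comm _ _
        · exact absurd rfl hab
    rcases key with hk | hk
    · exact Or.inl ⟨hk, by rw [hdiff _ hk]; exact hdSN⟩
    · exact Or.inr ⟨hk, by rw [hdiff _ hk]; exact hdWE⟩
  -- the twist, as a set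
  have hQdef : G.twist i P = (P \ T) ∪ (T \ P) := rfl
  -- generic matching argument
  have main : ∀ x₁ x₂ y₁ y₂ : LatticeEdge,
      P ∩ T = {x₁, x₂} → T \ P = {y₁, y₂} →
      (∀ v ∈ tileCorners c, (v ∈ endpointsOf x₁ ↔ v ∉ endpointsOf x₂)) →
      (∀ v ∈ tileCorners c, (v ∈ endpointsOf y₁ ↔ v ∉ endpointsOf y₂)) →
      ∀ v ∈ G.vertices, ∃! e, e ∈ G.twist i P ∧ v ∈ endpointsOf e := by
    intro x₁ x₂ y₁ y₂ hx hy hxv hyv v hv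
    obtain ⟨e₀, ⟨he₀P, he₀v⟩, huniq⟩ := hPm v hv
    by_cases hvc : v ∈ tileCorners c
    · -- v is a corner of the tile
      have hx₁ : x₁ ∈ P ∩ T := by rw [hx]; simp
      have hx₂ : x₂ ∈ P ∩ T := by rw [hx]; simp
      have hy₁ : y₁ ∈ T \ P := by rw [hy]; simp
      have hy₂ : y₂ ∈ T \ P := by rw [hy]; simp
      have he₀T : e₀ ∈ T := by
        by_cases hvx : v ∈ endpointsOf x₂
        · rw [← huniq x₂ ⟨hx₂.1, hvx⟩]; exact hx₂.2
        · have hvx1 : v ∈ endpointsOf x₁ := (hxv v hvc).2 hvx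
          rw [← huniq x₁ ⟨hx₁.1, hvx1⟩]; exact hx₁.2
      have hkey : ∀ e, e ∈ G.twist i P ∧ v ∈ endpointsOf e → e = y₁ ∨ e = y₂ := by
        rintro e ⟨he, hev⟩
        rcases he with ⟨heP, heT⟩ | heTP
        · exact absurd (huniq e ⟨heP, hev⟩ ▸ he₀T) heT
        · rw [hy] at heTP
          simpa using heTP
      rcases Classical.em (v ∈ endpointsOf y₁) with hvy | hvy
      · refine ⟨y₁, ⟨Or.inr hy₁, hvy⟩, ?_⟩
        intro e he
        rcases hkey e he with rfl | rfl
        · rfl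
        · exact absurd he.2 ((hyv v hvc).1 hvy)
      · have hvy₂ : v ∈ endpointsOf y₂ := by
          by_contra hvy₂
          exact hvy ((hyv v hvc).2 hvy₂)
        refine ⟨y₂, ⟨Or.inr hy₂, hvy₂⟩, ?_⟩
        intro e he
        rcases hkey e he with rfl | rfl
        · exact absurd hvy₂ ((hyv v hvc).1 he.2)
        · rfl
    · -- v is not a corner of the tile
      have he₀T : e₀ ∉ T := fun heT => hvc (endpoints_subset_corners heT he₀v)
      refine ⟨e₀, ⟨Or.inl ⟨he₀P, he₀T⟩, he₀v⟩, ?_⟩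
      rintro e ⟨he, hev⟩
      rcases he with ⟨heP, _⟩ | ⟨heT, _⟩
      · exact huniq e ⟨heP, hev⟩
      · exact absurd (endpoints_subset_corners heT hev) hvc
  -- twist is a perfect matching
  have hpm : G.IsPerfectMatching (G.twist i P) := by
    constructor
    · rintro e (⟨heP, _⟩ | ⟨heT, _⟩)
      · exact hPsub heP
      · exact hTedges heT
    · rcases hC with ⟨hx, hy⟩ | ⟨hx, hy⟩
      · exact main _ _ _ _ hx hy (corner_SN c) (corner_WE c)
      · exact main _ _ _ _ hx hy (corner_WE c) (corner_SN c)
  -- twist can twist again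
  have hint : G.twist i P ∩ T = T \ P := by
    rw [hQdef]
    ext e
    constructor
    · rintro ⟨(⟨_, heT⟩ | he), heT'⟩
      · exact absurd heT' heT
      · exact he
    · exact fun he => ⟨Or.inr he, he.1⟩
  have hct : G.CanTwist (G.twist i P) i := by
    refine ⟨hi1, hid, ?_⟩
    rw [hint]
    rcases hC with ⟨_, hy⟩ | ⟨_, hy⟩
    · rw [hy]; exact Set.ncard_pair (west_ne_east c)
    · rw [hy]; exact Set.ncard_pair (south_ne_north c)
  -- twist is an involution (pure set theory)
  have hinv : G.twist i (G.twist i P) = P := by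
    show ((P \ T) ∪ (T \ P)) \ T ∪ (T \ ((P \ T) ∪ (T \ P))) = P
    ext e
    by_cases heT : e ∈ T <;> by_cases heP : e ∈ P <;>
      simp [heT, heP]
  exact ⟨hpm, hct, hinv⟩
end

section
/- Let G be a snake graph and let P be a perfect matching of G that can twist on the tiles G_s and G_t, where |s − t| > 1. Then μ_s P can twist on G_t, μ_t P can twist on G_s, and μ_s(μ_t P) = μ_t(μ_s P). -/
lemma corner_sum (G : SnakeGraph) (i j : ℕ) (h1 : 1 ≤ i) (hij : i ≤ j) (hd : j ≤ G.d) :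
    (G.corner i).1 ≤ (G.corner j).1 ∧ (G.corner i).2 ≤ (G.corner j).2 ∧
    (G.corner j).1 + (G.corner j).2 = (G.corner i).1 + (G.corner i).2 + ((j : ℤ) - i) := by
  induction j with
  | zero => omega
  | succ k ih =>
    rcases Nat.eq_or_lt_of_le hij with h | h
    · subst h; refine ⟨le_refl _, le_refl _, by push_cast; ring⟩
    · have hk : i ≤ k := Nat.lt_succ_iff.mp h
      have hkd : k ≤ G.d := Nat.le_of_succ_le hd
      obtain ⟨a, b, c⟩ := ih hk hkd
      have h1k : 1 ≤ k := le_trans h1 hk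
      have hkd' : k < G.d := hd
      rcases G.corner_succ k h1k hkd' with h | h <;> rw [h] <;>
        refine ⟨by simpa using by omega, by simpa using by omega, ?_⟩ <;>
        · simp only []
          push_cast
          omega

lemma tiles_disjoint (G : SnakeGraph) (s t : ℕ) (hs1 : 1 ≤ s) (hst : s + 1 < t)
    (htd : t ≤ G.d) : G.tile s ∩ G.tile t = ∅ := by
  obtain ⟨a, b, c⟩ := corner_sum G s t hs1 (by omega) htd
  ext e
  simp only [SnakeGraph.tile, tileSides, southSide, northSide, westSide, eastSide,
    Set.mem_inter_iff, Set.mem_insert_iff, Set.mem_singleton_iff, Set.mem_empty_iff_false,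
    iff_false, not_and]
  have hc : (t : ℤ) - s ≥ 2 := by omega
  rintro (rfl | rfl | rfl | rfl) <;> simp only [Prod.ext_iff, Prod.mk.injEq] <;>
    push_neg <;> refine ⟨?_, ?_, ?_, ?_⟩ <;> rintro ⟨h1, h2⟩ <;>
    first | decide | omega | (intro _; omega)

lemma twist_inter_of_disjoint (G : SnakeGraph) (P : Set LatticeEdge) (s t : ℕ)
    (hd : G.tile s ∩ G.tile t = ∅) : (G.twist s P) ∩ G.tile t = P ∩ G.tile t := by
  ext e
  have hns : e ∈ G.tile t → e ∉ G.tile s := fun h1 h2 =>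
    Set.eq_empty_iff_forall_notMem.mp hd e ⟨h2, h1⟩
  simp only [SnakeGraph.twist, Set.mem_inter_iff, Set.mem_union, Set.mem_diff]
  tauto

/-- If a perfect matching `P` of a snake graph `G` can twist on tiles `G_s`
and `G_t` with `|s - t| > 1`, then `μ_s P` can twist on `G_t`, `μ_t P` can
twist on `G_s`, and the two twists commute: `μ_s (μ_t P) = μ_t (μ_s P)`. -/
theorem twists_commute
    (G : SnakeGraph) (P : Set LatticeEdge) (s t : ℕ)
    (hP : G.IsPerfectMatching P)
    (hs : G.CanTwist P s) (ht : G.CanTwist P t)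
    (hst : 1 < ((s : ℤ) - (t : ℤ)).natAbs) :
    G.CanTwist (G.twist s P) t ∧ G.CanTwist (G.twist t P) s ∧
      G.twist s (G.twist t P) = G.twist t (G.twist s P) := by
  obtain ⟨hs1, hsd, hs2⟩ := hs
  obtain ⟨ht1, htd, ht2⟩ := ht
  have hdisj : G.tile s ∩ G.tile t = ∅ := by
    rcases (by omega : s + 1 < t ∨ t + 1 < s) with h | h
    · exact tiles_disjoint G s t hs1 h htd
    · rw [Set.inter_comm]; exact tiles_disjoint G t s ht1 h hsd
  have hdisj' : G.tile t ∩ G.tile s = ∅ := by rw [Set.inter_comm]; exact hdisj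
  have htw : ∀ i Q, G.twist i Q = symmDiff Q (G.tile i) := fun i Q => by
    rw [Set.symmDiff_def]; rfl
  refine ⟨⟨ht1, htd, ?_⟩, ⟨hs1, hsd, ?_⟩, ?_⟩
  · rw [twist_inter_of_disjoint G P s t hdisj]; exact ht2
  · rw [twist_inter_of_disjoint G P t s hdisj']; exact hs2
  · rw [htw, htw, htw, htw, symmDiff_right_comm]
end

section
/- Let G be a snake graph, P a perfect matching of G, and i_1, …, i_r (r ≥ 1) a sequence of tile indices such that, setting Q_0 = P and Q_t = μ_{i_t} Q_{t−1}, each Q_{t−1} can twist on G_{i_t}, and Q_r = P. Then there exists t with 2 ≤ t ≤ r such that i_t = i_1. -/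
/-!
The first twist on tile `i = idx 0` flips a side of that tile which lies on no other tile:
since the tiles are stacked along the antidiagonals `x + y = const`, such a side is the
north or the east side of tile `i`, whichever is not shared with tile `i + 1`.  A twist on
any other tile leaves this side alone, so if tile `i` never recurs the side stays flipped,
and the final matching cannot be `P`.
-/

theorem eq_of_northSide_mem_of_eastSide_mem {c c' : ℤ × ℤ}
    (hn : northSide c ∈ tileSides c') (he : eastSide c ∈ tileSides c') : c' = c := by
  obtain ⟨c₁, c₂⟩ := c
  obtain ⟨c₁', c₂'⟩ := c'
  simp only [tileSides, southSide, northSide, westSide, eastSide, Set.mem_insert_iff,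
    Set.mem_singleton_iff, Prod.mk.injEq] at hn he ⊢
  omega

namespace SnakeGraph

theorem corner_fst_add_snd (G : SnakeGraph) {j : ℕ} (hj : 1 ≤ j) (hjd : j ≤ G.d) :
    (G.corner j).1 + (G.corner j).2 = (j : ℤ) - 1 := by
  induction j, hj using Nat.le_induction with
  | base => simp [G.corner_one]
  | succ n hn ih =>
    rcases G.corner_succ n hn (by omega) with h | h <;> rw [h] <;> push_cast <;>
      linarith [ih (by omega)]

theorem fst_add_snd_of_mem_tile (G : SnakeGraph) {j : ℕ} (hj : 1 ≤ j) (hjd : j ≤ G.d)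
    {e : LatticeEdge} (he : e ∈ G.tile j) :
    e.1.1 + e.1.2 = (j : ℤ) - 1 ∨ e.1.1 + e.1.2 = j := by
  have hc := G.corner_fst_add_snd hj hjd
  simp only [tile, tileSides, southSide, northSide, westSide, eastSide,
    Set.mem_insert_iff, Set.mem_singleton_iff] at he
  rcases he with rfl | rfl | rfl | rfl <;> simp only <;> omega

theorem exists_mem_tile_forall_ne_not_mem_tile (G : SnakeGraph) {i : ℕ} (hi : 1 ≤ i)
    (hid : i ≤ G.d) :
    ∃ e ∈ G.tile i, ∀ j, 1 ≤ j → j ≤ G.d → j ≠ i → e ∉ G.tile j := by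
  obtain ⟨e, he, hlevel, hnext⟩ : ∃ e ∈ G.tile i, e.1.1 + e.1.2 = (i : ℤ) ∧
      (i < G.d → e ∉ G.tile (i + 1)) := by
    have hc := G.corner_fst_add_snd hi hid
    have hnorth : northSide (G.corner i) ∈ G.tile i := by simp [tile, tileSides]
    have heast : eastSide (G.corner i) ∈ G.tile i := by simp [tile, tileSides]
    by_cases hd : i < G.d
    · have hne : G.corner (i + 1) ≠ G.corner i := by
        rcases G.corner_succ i hi hd with h | h <;> simp [h, Prod.ext_iff]
      by_cases hn : northSide (G.corner i) ∈ G.tile (i + 1)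
      · exact ⟨eastSide (G.corner i), heast, by simp only [eastSide]; omega,
          fun _ he ↦ hne (eq_of_northSide_mem_of_eastSide_mem hn he)⟩
      · exact ⟨northSide (G.corner i), hnorth, by simp only [northSide]; omega, fun _ ↦ hn⟩
    · exact ⟨northSide (G.corner i), hnorth, by simp only [northSide]; omega, fun h ↦ absurd h hd⟩
  refine ⟨e, he, fun j hj hjd hji hej ↦ ?_⟩
  have hj : j = i + 1 := by have := G.fst_add_snd_of_mem_tile hj hjd hej; omega
  subst hj
  exact hnext (by omega) hej

theorem twist_eq_symmDiff (G : SnakeGraph) (i : ℕ) (P : Set LatticeEdge) :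
    G.twist i P = symmDiff P (G.tile i) := rfl

end SnakeGraph

theorem twist_cycle_repeats_first_general
    (G : SnakeGraph) (P : Set LatticeEdge)
    (r : ℕ) (hr : 1 ≤ r) (idx : ℕ → ℕ) (R : ℕ → Set LatticeEdge)
    (h0 : R 0 = P) (hrP : R r = P)
    (hstep : ∀ t, t < r → G.CanTwist (R t) (idx t) ∧ R (t + 1) = G.twist (idx t) (R t)) :
    ∃ t, 1 ≤ t ∧ t < r ∧ idx t = idx 0 := by
  by_contra! hne
  obtain ⟨⟨hi, hid, -⟩, hR1⟩ := hstep 0 (by omega)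
  obtain ⟨e, he, hother⟩ := G.exists_mem_tile_forall_ne_not_mem_tile hi hid
  have hflipped : ∀ t, 1 ≤ t → t ≤ r → (e ∈ R t ↔ e ∉ P) := by
    intro t ht
    induction t, ht using Nat.le_induction with
    | base => intro _; simp [hR1, h0, G.twist_eq_symmDiff, Set.mem_symmDiff, he]
    | succ n hn ih =>
      intro hnr
      obtain ⟨⟨hn1, hnd, -⟩, hRn⟩ := hstep n (by omega)
      have heN := hother _ hn1 hnd (hne n hn (by omega))
      simpa [hRn, G.twist_eq_symmDiff, Set.mem_symmDiff, heN] using ih (by omega)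
  simpa [hrP] using hflipped r hr le_rfl

/-- If a sequence of twists (with tile indices `idx 0, idx 1, …, idx (r-1)`,
`r ≥ 1`) takes a perfect matching `P` of a snake graph `G` back to itself,
then some later twist in the sequence is performed on the same tile as the
first one. -/
theorem twist_cycle_repeats_first
    (G : SnakeGraph) (P : Set LatticeEdge) (hP : G.IsPerfectMatching P)
    (r : ℕ) (hr : 1 ≤ r) (idx : ℕ → ℕ) (R : ℕ → Set LatticeEdge)
    (h0 : R 0 = P) (hrP : R r = P)
    (hstep : ∀ t, t < r → G.CanTwist (R t) (idx t) ∧ R (t + 1) = G.twist (idx t) (R t)) :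
    ∃ t, 1 ≤ t ∧ t < r ∧ idx t = idx 0 :=
  twist_cycle_repeats_first_general G P r hr idx R h0 hrP hstep
end

section
/- Let G be a snake graph, P a perfect matching of G, and i_1, …, i_r (r ≥ 1) a sequence of tile indices such that, setting Q_0 = P and Q_t = μ_{i_t} Q_{t−1}, each Q_{t−1} can twist on G_{i_t}, and Q_r = P. Then there exist indices 1 ≤ t < t' ≤ r such that i_t = i_{t'}, the indices i_s for t < s < t' are pairwise distinct and all different from i_t, and moreover |i_s − i_t| > 1 for every s with t < s < t'. -/
/-!
A perfect matching that can twist on a tile meets it in a pair of opposite sides, so two such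
matchings either agree on all four sides of the tile or disagree on all four. Along a twist
sequence a side is flipped once for every twist at a tile containing it; a side of tile `i` lies
in no tile other than `i - 1`, `i`, `i + 1`, and some side of tile `i` lies in no other tile at
all. Such a private side shows that a sequence returning to its starting matching twists some
tile twice; take a repetition `t < t'` of a tile `i` with no repetition strictly inside. Between
`t` and `t'` a private side of tile `i` is flipped once, whereas the side shared with a
neighbour `i ± 1` twisted in between would be flipped twice: impossible.
-/

theorem Set.exists_eq_injOn_Ico_of_not_injOn {α : Type*} {f : ℕ → α} {a b : ℕ}
    (h : ¬Set.InjOn f (Set.Ico a b)) :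
    ∃ t t', a ≤ t ∧ t < t' ∧ t' < b ∧ f t = f t' ∧ Set.InjOn f (Set.Ico t t') := by
  induction b using Nat.strong_induction_on generalizing a with
  | _ b ih =>
  obtain ⟨s, s', hs, hss', hs'b, hf⟩ : ∃ s s', a ≤ s ∧ s < s' ∧ s' < b ∧ f s = f s' := by
    simp only [Set.InjOn, Set.mem_Ico, not_forall] at h
    obtain ⟨x, ⟨hax, hxb⟩, y, ⟨hay, hyb⟩, hf, hxy⟩ := h
    rcases Nat.lt_or_gt_of_ne hxy with hlt | hlt
    exacts [⟨x, y, hax, hlt, hyb, hf⟩, ⟨y, x, hay, hlt, hxb, hf.symm⟩]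
  by_cases hinj : Set.InjOn f (Set.Ico s s')
  · exact ⟨s, s', hs, hss', hs'b, hf, hinj⟩
  · obtain ⟨t, t', hst, htt', ht's', hf', hinj'⟩ := ih s' hs'b hinj
    exact ⟨t, t', hs.trans hst, htt', ht's'.trans hs'b, hf', hinj'⟩

def IsPerfectMatchingOn (B : Set LatticeEdge) (V : Set (ℤ × ℤ)) : Prop :=
  (∀ e ∈ B, endpointsOf e ⊆ V) ∧ ∀ v ∈ V, ∃! e, e ∈ B ∧ v ∈ endpointsOf e

theorem isPerfectMatchingOn_south_north (c : ℤ × ℤ) :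
    IsPerfectMatchingOn {southSide c, northSide c} (tileCorners c) := by
  refine ⟨?_, fun v hv => ?_⟩
  · rintro e (rfl | rfl) v hv <;>
      simp [endpointsOf, southSide, northSide, tileCorners] at hv ⊢ <;> tauto
  · simp only [tileCorners, Set.mem_insert_iff, Set.mem_singleton_iff] at hv
    refine existsUnique_of_exists_of_unique ?_ ?_
    · rcases hv with rfl | rfl | rfl | rfl <;> simp [endpointsOf, southSide, northSide]
    · rintro e₁ e₂ ⟨h₁ | h₁, hv₁⟩ ⟨h₂ | h₂, hv₂⟩ <;> subst h₁ h₂ <;>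
        simp [endpointsOf, southSide, northSide, Prod.ext_iff] at hv₁ hv₂ ⊢ <;> omega

theorem isPerfectMatchingOn_west_east (c : ℤ × ℤ) :
    IsPerfectMatchingOn {westSide c, eastSide c} (tileCorners c) := by
  refine ⟨?_, fun v hv => ?_⟩
  · rintro e (rfl | rfl) v hv <;>
      simp [endpointsOf, westSide, eastSide, tileCorners] at hv ⊢ <;> tauto
  · simp only [tileCorners, Set.mem_insert_iff, Set.mem_singleton_iff] at hv
    refine existsUnique_of_exists_of_unique ?_ ?_
    · rcases hv with rfl | rfl | rfl | rfl <;> simp [endpointsOf, westSide, eastSide]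
    · rintro e₁ e₂ ⟨h₁ | h₁, hv₁⟩ ⟨h₂ | h₂, hv₂⟩ <;> subst h₁ h₂ <;>
        simp [endpointsOf, westSide, eastSide, Prod.ext_iff] at hv₁ hv₂ ⊢ <;> omega

theorem tileSides_diff_south_north (c : ℤ × ℤ) :
    tileSides c \ {southSide c, northSide c} = {westSide c, eastSide c} := by
  ext e
  simp only [tileSides, Set.mem_sdiff, Set.mem_insert_iff, Set.mem_singleton_iff]
  constructor
  · rintro ⟨rfl | rfl | rfl | rfl, h⟩ <;> simp_all
  · rintro (rfl | rfl) <;> simp [southSide, northSide, westSide, eastSide, Prod.ext_iff]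

theorem tileSides_diff_west_east (c : ℤ × ℤ) :
    tileSides c \ {westSide c, eastSide c} = {southSide c, northSide c} := by
  ext e
  simp only [tileSides, Set.mem_sdiff, Set.mem_insert_iff, Set.mem_singleton_iff]
  constructor
  · rintro ⟨rfl | rfl | rfl | rfl, h⟩ <;> simp_all
  · rintro (rfl | rfl) <;> simp [southSide, northSide, westSide, eastSide, Prod.ext_iff]

namespace SnakeGraph

variable {G : SnakeGraph} {Q : Set LatticeEdge} {i : ℕ}

theorem corner_fst_add_snd_s6 (hi : 1 ≤ i) (hid : i ≤ G.d) :
    (G.corner i).1 + (G.corner i).2 = i - 1 := by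
  induction i, hi using Nat.le_induction with
  | base => simp [G.corner_one]
  | succ i hi ih =>
    rcases G.corner_succ i hi (by omega) with h | h <;> rw [h] <;> push_cast <;>
      linarith [ih (by omega)]

theorem fst_add_snd_of_mem_tile_s6 {x : LatticeEdge} {j : ℕ} (hj : 1 ≤ j) (hjd : j ≤ G.d)
    (hx : x ∈ G.tile j) : x.1.1 + x.1.2 + 1 = j ∨ x.1.1 + x.1.2 = j := by
  have := corner_fst_add_snd_s6 hj hjd
  simp only [tile, tileSides, Set.mem_insert_iff, Set.mem_singleton_iff] at hx
  rcases hx with rfl | rfl | rfl | rfl <;> simp only [southSide, northSide, westSide, eastSide] <;>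
    omega

theorem exists_mem_tile_mem_tile_succ (hi : 1 ≤ i) (hid : i < G.d) :
    ∃ x, x ∈ G.tile i ∧ x ∈ G.tile (i + 1) := by
  rcases G.corner_succ i hi hid with h | h
  · exact ⟨eastSide (G.corner i), by simp [tile, tileSides],
      by simp [tile, tileSides, h, eastSide, westSide]⟩
  · exact ⟨northSide (G.corner i), by simp [tile, tileSides],
      by simp [tile, tileSides, h, northSide, southSide]⟩

theorem exists_mem_tile_forall_mem_tile_eq (hi : 1 ≤ i) (hid : i ≤ G.d) :
    ∃ y ∈ G.tile i, ∀ j, 1 ≤ j → j ≤ G.d → y ∈ G.tile j → j = i := by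
  suffices ∃ y ∈ G.tile i, y.1.1 + y.1.2 = i ∧ (i < G.d → y ∉ G.tile (i + 1)) by
    obtain ⟨y, hy, hlevel, hsucc⟩ := this
    refine ⟨y, hy, fun j hj hjd hyj => ?_⟩
    rcases fst_add_snd_of_mem_tile_s6 hj hjd hyj with h | h
    · obtain rfl : j = i + 1 := by omega
      exact absurd hyj (hsucc (by omega))
    · omega
  have hsum := corner_fst_add_snd_s6 hi hid
  by_cases hup : i < G.d ∧ G.corner (i + 1) = ((G.corner i).1, (G.corner i).2 + 1)
  · refine ⟨eastSide (G.corner i), by simp [tile, tileSides], by simp [eastSide]; omega,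
      fun _ => ?_⟩
    simp [tile, tileSides, hup.2, eastSide, southSide, northSide, westSide]
  · refine ⟨northSide (G.corner i), by simp [tile, tileSides], by simp [northSide]; omega,
      fun h => ?_⟩
    have hright := (G.corner_succ i hi h).resolve_right (fun h' => hup ⟨h, h'⟩)
    simp [tile, tileSides, hright, eastSide, southSide, northSide, westSide]

theorem tile_subset_edges (hi : 1 ≤ i) (hid : i ≤ G.d) : G.tile i ⊆ G.edges :=
  Set.subset_biUnion_of_mem (u := G.tile) (Set.mem_Icc.2 ⟨hi, hid⟩)

theorem tileCorners_subset_vertices (hi : 1 ≤ i) (hid : i ≤ G.d) :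
    tileCorners (G.corner i) ⊆ G.vertices :=
  Set.subset_biUnion_of_mem (u := fun j => tileCorners (G.corner j)) (Set.mem_Icc.2 ⟨hi, hid⟩)

theorem IsPerfectMatching.diff_union {A B : Set LatticeEdge} {V : Set (ℤ × ℤ)}
    (hQ : G.IsPerfectMatching Q) (hAQ : A ⊆ Q) (hA : IsPerfectMatchingOn A V)
    (hBG : B ⊆ G.edges) (hB : IsPerfectMatchingOn B V) : G.IsPerfectMatching (Q \ A ∪ B) := by
  refine ⟨Set.union_subset (Set.sdiff_subset.trans hQ.1) hBG, fun v hv => ?_⟩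
  by_cases hvV : v ∈ V
  · obtain ⟨b, hb, hbu⟩ := hB.2 v hvV
    obtain ⟨a, ha, -⟩ := hA.2 v hvV
    refine ⟨b, ⟨Or.inr hb.1, hb.2⟩, ?_⟩
    rintro e ⟨he | he, hve⟩
    · exact absurd ((hQ.2 v hv).unique ⟨he.1, hve⟩ ⟨hAQ ha.1, ha.2⟩ ▸ ha.1) he.2
    · exact hbu e ⟨he, hve⟩
  · obtain ⟨e, he, heu⟩ := hQ.2 v hv
    refine ⟨e, ⟨Or.inl ⟨he.1, fun heA => hvV (hA.1 e heA he.2)⟩, he.2⟩, ?_⟩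
    rintro e' ⟨he' | he', hve'⟩
    · exact heu e' ⟨he'.1, hve'⟩
    · exact absurd (hB.1 e' he' hve') hvV

theorem IsPerfectMatching.inter_tile_eq (hQ : G.IsPerfectMatching Q) (hi : G.CanTwist Q i) :
    Q ∩ G.tile i = {southSide (G.corner i), northSide (G.corner i)} ∨
      Q ∩ G.tile i = {westSide (G.corner i), eastSide (G.corner i)} := by
  obtain ⟨hi1, hid, hcard⟩ := hi
  have hexcl : ∀ v ∈ tileCorners (G.corner i), ∀ e₁ ∈ Q, ∀ e₂ ∈ Q,
      v ∈ endpointsOf e₁ → v ∈ endpointsOf e₂ → e₁ = e₂ := fun v hv e₁ h₁ e₂ h₂ hv₁ hv₂ =>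
    (hQ.2 v (tileCorners_subset_vertices hi1 hid hv)).unique ⟨h₁, hv₁⟩ ⟨h₂, hv₂⟩
  have heq : ∀ a b, a ≠ b → Q ∩ G.tile i ⊆ {a, b} → Q ∩ G.tile i = {a, b} := fun a b hab hsub =>
    Set.eq_of_subset_of_ncard_le hsub (by rw [hcard, Set.ncard_pair hab]) (Set.toFinite _)
  rw [tile] at heq ⊢
  generalize G.corner i = c at hexcl heq ⊢
  by_cases hSN : southSide c ∈ Q ∨ northSide c ∈ Q
  · have hW : westSide c ∉ Q := fun hW => by
      rcases hSN with h | h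
      · have := hexcl c (by simp [tileCorners]) _ h _ hW (by simp [endpointsOf, southSide])
          (by simp [endpointsOf, westSide])
        simp [southSide, westSide] at this
      · have := hexcl (c.1, c.2 + 1) (by simp [tileCorners]) _ h _ hW
          (by simp [endpointsOf, northSide]) (by simp [endpointsOf, westSide])
        simp [northSide, westSide] at this
    have hE : eastSide c ∉ Q := fun hE => by
      rcases hSN with h | h
      · have := hexcl (c.1 + 1, c.2) (by simp [tileCorners]) _ h _ hE
          (by simp [endpointsOf, southSide]) (by simp [endpointsOf, eastSide])
        simp [southSide, eastSide] at this
      · have := hexcl (c.1 + 1, c.2 + 1) (by simp [tileCorners]) _ h _ hE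
          (by simp [endpointsOf, northSide]) (by simp [endpointsOf, eastSide])
        simp [northSide, eastSide] at this
    refine Or.inl (heq _ _ (by simp [southSide, northSide, Prod.ext_iff]) ?_)
    rintro e ⟨heQ, rfl | rfl | rfl | rfl⟩ <;> simp [hW, hE] at heQ ⊢
  · rw [not_or] at hSN
    refine Or.inr (heq _ _ (by simp [westSide, eastSide, Prod.ext_iff]) ?_)
    rintro e ⟨heQ, rfl | rfl | rfl | rfl⟩ <;> simp [hSN.1, hSN.2] at heQ ⊢

theorem IsPerfectMatching.twist (hQ : G.IsPerfectMatching Q) (hi : G.CanTwist Q i) :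
    G.IsPerfectMatching (G.twist i Q) := by
  have hT : tileSides (G.corner i) ⊆ G.edges := tile_subset_edges hi.1 hi.2.1
  have htwist : G.twist i Q = Q \ (Q ∩ G.tile i) ∪ G.tile i \ (Q ∩ G.tile i) := by
    rw [SnakeGraph.twist, Set.sdiff_self_inter, Set.sdiff_inter_self_eq_sdiff]
  rw [htwist, tile]
  rcases hQ.inter_tile_eq hi with h | h <;> rw [tile] at h <;> rw [h]
  · exact hQ.diff_union (h ▸ Set.inter_subset_left) (isPerfectMatchingOn_south_north _)
      (Set.sdiff_subset.trans hT) (tileSides_diff_south_north _ ▸ isPerfectMatchingOn_west_east _)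
  · exact hQ.diff_union (h ▸ Set.inter_subset_left) (isPerfectMatchingOn_west_east _)
      (Set.sdiff_subset.trans hT) (tileSides_diff_west_east _ ▸ isPerfectMatchingOn_south_north _)

theorem IsPerfectMatching.mem_iff_mem_or_mem_iff_notMem (hQ : G.IsPerfectMatching Q)
    {Q' : Set LatticeEdge} (hQ' : G.IsPerfectMatching Q') (hi : G.CanTwist Q i)
    (hi' : G.CanTwist Q' i) :
    (∀ x ∈ G.tile i, x ∈ Q ↔ x ∈ Q') ∨ ∀ x ∈ G.tile i, x ∈ Q ↔ x ∉ Q' := by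
  have hmem : ∀ {Q : Set LatticeEdge} {x}, x ∈ G.tile i → (x ∈ Q ↔ x ∈ Q ∩ G.tile i) :=
    fun hx => ⟨fun h => ⟨h, hx⟩, And.left⟩
  have hSN : ∀ x ∈ G.tile i, x ∈ ({southSide (G.corner i), northSide (G.corner i)} : Set _) ↔
      x ∉ ({westSide (G.corner i), eastSide (G.corner i)} : Set _) := by
    rintro x (rfl | rfl | rfl | rfl) <;> simp [southSide, northSide, westSide, eastSide]
  rcases hQ.inter_tile_eq hi with h | h <;> rcases hQ'.inter_tile_eq hi' with h' | h'
  · exact Or.inl fun x hx => by rw [hmem hx, hmem (Q := Q') hx, h, h']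
  · exact Or.inr fun x hx => by rw [hmem hx, hmem (Q := Q') hx, h, h']; exact hSN x hx
  · exact Or.inr fun x hx => by
      rw [hmem hx, hmem (Q := Q') hx, h, h']; exact iff_not_comm.1 (hSN x hx)
  · exact Or.inl fun x hx => by rw [hmem hx, hmem (Q := Q') hx, h, h']

def IsTwistSeq (G : SnakeGraph) (idx : ℕ → ℕ) (R : ℕ → Set LatticeEdge) (u v : ℕ) : Prop :=
  ∀ s, u ≤ s → s < v → G.CanTwist (R s) (idx s) ∧ R (s + 1) = G.twist (idx s) (R s)

namespace IsTwistSeq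

variable {idx : ℕ → ℕ} {R : ℕ → Set LatticeEdge} {u v : ℕ}

theorem mono {u' v' : ℕ} (h : G.IsTwistSeq idx R u v) (hu : u ≤ u') (hv : v' ≤ v) :
    G.IsTwistSeq idx R u' v' :=
  fun s hs hs' => h s (hu.trans hs) (hs'.trans_le hv)

theorem isPerfectMatching (h : G.IsTwistSeq idx R u v) (hu : G.IsPerfectMatching (R u))
    {s : ℕ} (hus : u ≤ s) (hsv : s ≤ v) : G.IsPerfectMatching (R s) := by
  induction s, hus using Nat.le_induction with
  | base => exact hu
  | succ s hus ih =>
    rw [(h s hus (by omega)).2]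
    exact (ih (by omega)).twist (h s hus (by omega)).1

open scoped Classical in
theorem mem_iff_mem_iff_even_card (h : G.IsTwistSeq idx R u v) (huv : u ≤ v) (x : LatticeEdge) :
    x ∈ R v ↔ (x ∈ R u ↔ Even ((Finset.Ico u v).filter fun s => x ∈ G.tile (idx s)).card) := by
  induction v, huv using Nat.le_induction with
  | base => simp
  | succ v huv ih =>
    rw [(h v huv (by omega)).2, Nat.Ico_succ_right_eq_insert_Ico huv, Finset.filter_insert]
    have ih := ih (h.mono le_rfl (by omega))
    by_cases hx : x ∈ G.tile (idx v)
    · rw [if_pos hx, Finset.card_insert_of_notMem (by simp), Nat.even_add_one]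
      simp only [SnakeGraph.twist, Set.mem_union, Set.mem_sdiff, hx]
      tauto
    · rw [if_neg hx]
      simp only [SnakeGraph.twist, Set.mem_union, Set.mem_sdiff, hx]
      tauto

theorem mem_iff_notMem_of_injOn (h : G.IsTwistSeq idx R u v) (huv : u < v)
    (hinj : Set.InjOn idx (Set.Ico u v)) {y : LatticeEdge} (hyu : y ∈ G.tile (idx u))
    (hy : ∀ j, 1 ≤ j → j ≤ G.d → y ∈ G.tile j → j = idx u) : y ∈ R v ↔ y ∉ R u := by
  classical
  have hfilter : ((Finset.Ico u v).filter fun s => y ∈ G.tile (idx s)) = {u} := by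
    refine Finset.eq_singleton_iff_unique_mem.2 ⟨by simp [huv, hyu], fun s hs => ?_⟩
    rw [Finset.mem_filter, Finset.mem_Ico] at hs
    obtain ⟨hs1, hsd, -⟩ := (h s hs.1.1 hs.1.2).1
    exact hinj hs.1 ⟨le_rfl, huv⟩ (hy _ hs1 hsd hs.2)
  have := h.mem_iff_mem_iff_even_card huv.le y
  rw [hfilter] at this
  simpa using this

theorem not_injOn_of_eq (h : G.IsTwistSeq idx R u v) (huv : u < v) (hR : R v = R u) :
    ¬Set.InjOn idx (Set.Ico u v) := fun hinj => by
  obtain ⟨hu1, hud, -⟩ := (h u le_rfl huv).1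
  obtain ⟨y, hyu, hy⟩ := exists_mem_tile_forall_mem_tile_eq hu1 hud
  exact iff_not_self (hR ▸ h.mem_iff_notMem_of_injOn huv hinj hyu hy)

theorem mem_iff_mem_of_injOn (h : G.IsTwistSeq idx R u v) (huv : u < v)
    (hinj : Set.InjOn idx (Set.Ico u v)) {s₀ : ℕ} (hus₀ : u < s₀) (hs₀v : s₀ < v)
    {x : LatticeEdge} (hxu : x ∈ G.tile (idx u)) (hxs₀ : x ∈ G.tile (idx s₀)) :
    x ∈ R v ↔ x ∈ R u := by
  classical
  obtain ⟨hu1, hud, -⟩ := (h u le_rfl huv).1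
  obtain ⟨hs₀1, hs₀d, -⟩ := (h s₀ hus₀.le hs₀v).1
  have hne : idx s₀ ≠ idx u := hinj.ne ⟨hus₀.le, hs₀v⟩ ⟨le_rfl, huv⟩ hus₀.ne'
  have hfilter : ((Finset.Ico u v).filter fun s => x ∈ G.tile (idx s)) = {u, s₀} := by
    ext s
    simp only [Finset.mem_filter, Finset.mem_Ico, Finset.mem_insert, Finset.mem_singleton]
    constructor
    · rintro ⟨⟨hus, hsv⟩, hxs⟩
      rcases hus.eq_or_lt with rfl | hus
      · exact Or.inl rfl
      obtain ⟨hs1, hsd, -⟩ := (h s hus.le hsv).1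
      have : idx s ≠ idx u := hinj.ne ⟨hus.le, hsv⟩ ⟨le_rfl, huv⟩ hus.ne'
      have := fst_add_snd_of_mem_tile_s6 hs1 hsd hxs
      have := fst_add_snd_of_mem_tile_s6 hu1 hud hxu
      have := fst_add_snd_of_mem_tile_s6 hs₀1 hs₀d hxs₀
      exact Or.inr (hinj ⟨hus.le, hsv⟩ ⟨hus₀.le, hs₀v⟩ (by omega))
    · rintro (rfl | rfl)
      exacts [⟨⟨le_rfl, huv⟩, hxu⟩, ⟨⟨hus₀.le, hs₀v⟩, hxs₀⟩]
  have := h.mem_iff_mem_iff_even_card huv.le x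
  rw [hfilter, Finset.card_pair hus₀.ne] at this
  simpa using this

theorem one_lt_natAbs_sub_of_injOn (h : G.IsTwistSeq idx R u v) (huv : u < v)
    (hu : G.IsPerfectMatching (R u)) (hv : G.IsPerfectMatching (R v))
    (hcan : G.CanTwist (R v) (idx u)) (hinj : Set.InjOn idx (Set.Ico u v)) {s₀ : ℕ}
    (hus₀ : u < s₀) (hs₀v : s₀ < v) : 1 < ((idx s₀ : ℤ) - idx u).natAbs := by
  by_contra! hclose
  have hcanu := (h u le_rfl huv).1
  obtain ⟨hu1, hud⟩ : 1 ≤ idx u ∧ idx u ≤ G.d := ⟨hcanu.1, hcanu.2.1⟩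
  obtain ⟨hs₀1, hs₀d, -⟩ := (h s₀ hus₀.le hs₀v).1
  have hne : idx s₀ ≠ idx u := hinj.ne ⟨hus₀.le, hs₀v⟩ ⟨le_rfl, huv⟩ hus₀.ne'
  obtain ⟨x, hxu, hxs₀⟩ : ∃ x, x ∈ G.tile (idx u) ∧ x ∈ G.tile (idx s₀) := by
    rcases (by omega : idx s₀ = idx u + 1 ∨ idx u = idx s₀ + 1) with hsucc | hsucc <;>
      rw [hsucc]
    · exact exists_mem_tile_mem_tile_succ hu1 (by omega)
    · exact (exists_mem_tile_mem_tile_succ hs₀1 (by omega)).imp fun _ => And.symm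
  obtain ⟨y, hyu, hy⟩ := exists_mem_tile_forall_mem_tile_eq hu1 hud
  have hx := h.mem_iff_mem_of_injOn huv hinj hus₀ hs₀v hxu hxs₀
  have hy := h.mem_iff_notMem_of_injOn huv hinj hyu hy
  rcases hu.mem_iff_mem_or_mem_iff_notMem hv hcanu hcan with hsame | hflip
  · exact iff_not_self ((hsame y hyu).trans hy)
  · exact iff_not_self (hx.trans (hflip x hxu))

end IsTwistSeq

end SnakeGraph

/-- If a sequence of twists (with tile indices `idx 0, idx 1, …, idx (r-1)`,
`r ≥ 1`) takes a perfect matching `P` of a snake graph `G` back to itself,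
then there are positions `t < t'` in the sequence with the same tile index
such that the tile indices strictly between them are pairwise distinct, all
different from `idx t`, and in fact all at distance greater than `1` from
`idx t`. -/
theorem twist_cycle_close_pair
    (G : SnakeGraph) (P : Set LatticeEdge) (hP : G.IsPerfectMatching P)
    (r : ℕ) (hr : 1 ≤ r) (idx : ℕ → ℕ) (R : ℕ → Set LatticeEdge)
    (h0 : R 0 = P) (hrP : R r = P)
    (hstep : ∀ t, t < r → G.CanTwist (R t) (idx t) ∧ R (t + 1) = G.twist (idx t) (R t)) :
    ∃ t t', t < t' ∧ t' < r ∧ idx t' = idx t ∧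
      (∀ s s', t < s → s < s' → s' < t' → idx s ≠ idx s') ∧
      (∀ s, t < s → s < t' → idx s ≠ idx t) ∧
      (∀ s, t < s → s < t' → 1 < ((idx s : ℤ) - (idx t : ℤ)).natAbs) := by
  have hseq : G.IsTwistSeq idx R 0 r := fun s _ hs => hstep s hs
  obtain ⟨t, t', -, htt', ht'r, heq, hinj⟩ := Set.exists_eq_injOn_Ico_of_not_injOn
    (hseq.not_injOn_of_eq (by omega) (hrP.trans h0.symm))
  have hpm : ∀ s ≤ r, G.IsPerfectMatching (R s) :=
    fun s hs => hseq.isPerfectMatching (h0 ▸ hP) s.zero_le hs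
  refine ⟨t, t', htt', ht'r, heq.symm, fun s s' hts hss' hs't' => ?_,
    fun s hts hst' => hinj.ne ⟨hts.le, hst'⟩ ⟨le_rfl, htt'⟩ hts.ne', fun s hts hst' => ?_⟩
  · exact hinj.ne ⟨hts.le, hss'.trans hs't'⟩ ⟨(hts.trans hss').le, hs't'⟩ hss'.ne
  · exact (hseq.mono (Nat.zero_le t) ht'r.le).one_lt_natAbs_sub_of_injOn htt' (hpm t (by omega))
      (hpm t' ht'r.le) (heq ▸ (hstep t' ht'r).1) hinj hts hst'
end
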